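/- Let e_1,...,e_{n-1} be the standard basis of ℝ^{n-1} and e_0 = -(e_1 + ... + e_{n-1}). For u ∈ ℤ^{n-1} and ε ∈ {0,1}^n \ {0} with σ(ε) = {k ∈ [n] : ε_k = 0} = {i_1,...,i_s}, one has lim_{t→0} χ^u(t) = [ε_0 : ... : ε_{n-1}] if and only if u lies in the relative interior of the cone Cone(e_{i_1},...,e_{i_s}). -/

import Mathlib

/-!
Put `v = (0, u) ∈ ℤ^{m+1}`, so that `χ^u(t) = [t ^ v₀ : ⋯ : t ^ vₘ]`. Dividing by `t ^ (min v)`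
shows that the limit at `t = 0` is the indicator vector of the set where `v` is minimal; hence
it equals `[ε]` iff `σ = {k | min v < v k}`. On the cone side, the `i`-th coordinate of
`∑_{k ∈ σ} a_k e_k` is `b_{i+1} - b_0`, where `b` extends `a` by zero outside `σ`. So `u` lies in
the relative interior of the cone iff `v = b - b₀` with `b > 0` exactly on `σ`, i.e. iff `v` takes
a constant value `-b₀` off `σ` and is strictly larger on `σ`, and that value must be `min v`.
-/

open Filter

/-- The quotient topology on the complex projective space ℙ(V), induced from
V ∖ {0}. -/
instance projTop (V : Type*) [AddCommGroup V] [Module ℂ V] [TopologicalSpace V] :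
    TopologicalSpace (Projectivization ℂ V) :=
  inferInstanceAs (TopologicalSpace (Quotient (projectivizationSetoid ℂ V)))

open Topology LinearAlgebra.Projectivization

theorem tendsto_zpow_sub_nhds_zero {K : Type*} [DivisionRing K] [TopologicalSpace K]
    [ContinuousMul K] {ι : Type*} (v : ι → ℤ) {μ : ℤ} (hμ : ∀ k, μ ≤ v k) :
    Tendsto (fun (t : K) k => t ^ (v k - μ)) (𝓝 0) (𝓝 fun k => if v k = μ then 1 else 0) := by
  refine tendsto_pi_nhds.2 fun k => ?_
  obtain ⟨n, hn⟩ := Int.eq_ofNat_of_zero_le (sub_nonneg.2 (hμ k))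
  have hvk : v k = μ ↔ n = 0 := by omega
  simp only [hn, zpow_natCast, hvk, ← zero_pow_eq]
  exact (continuous_pow n).tendsto 0

namespace Projectivization

section NormCoordRatio

variable {ι : Type*} [Fintype ι]

noncomputable def normCoordRatio (k : ι) : ℙ ℂ (ι → ℂ) → ℝ :=
  Projectivization.lift (fun x => ‖(x : ι → ℂ) k‖ / ‖(x : ι → ℂ)‖) (by
    rintro ⟨a, ha⟩ ⟨b, hb⟩ t rfl
    have ht : t ≠ 0 := by rintro rfl; simp at ha
    simp only [Pi.smul_apply, norm_smul, smul_eq_mul, norm_mul]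
    rw [mul_div_mul_left _ _ (norm_ne_zero_iff.2 ht)])

theorem continuous_normCoordRatio (k : ι) : Continuous (normCoordRatio k) :=
  Continuous.quotient_lift
    (((continuous_apply k).comp continuous_subtype_val).norm.div continuous_subtype_val.norm
      fun x => norm_ne_zero_iff.2 x.2) _

theorem normCoordRatio_mk_of_zero_or_one (k : ι) {w : ι → ℂ} (hw01 : ∀ k, w k = 0 ∨ w k = 1)
    (hw : w ≠ 0) : normCoordRatio k (mk ℂ w hw) = ‖w k‖ := by
  obtain ⟨k₁, hk₁⟩ := Function.ne_iff.1 hw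
  have hnorm : ‖w‖ = 1 := by
    refine le_antisymm ((pi_norm_le_iff_of_nonneg zero_le_one).2 fun i => ?_) ?_
    · rcases hw01 i with h | h <;> simp [h]
    · simpa [(hw01 k₁).resolve_left hk₁] using norm_le_pi_norm w k₁
  simp [normCoordRatio, hnorm]

/-- The functions `normCoordRatio k` separate points with `{0, 1}` coordinates; this stands in
for the Hausdorff property of `ℙ ℂ (ι → ℂ)`. -/
theorem eq_of_tendsto_mk_of_zero_or_one {α : Type*} {l : Filter α} [l.NeBot]
    {f : α → ℙ ℂ (ι → ℂ)} {w w' : ι → ℂ} (hw01 : ∀ k, w k = 0 ∨ w k = 1)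
    (hw'01 : ∀ k, w' k = 0 ∨ w' k = 1) (hw : w ≠ 0) (hw' : w' ≠ 0)
    (h : Tendsto f l (𝓝 (mk ℂ w hw))) (h' : Tendsto f l (𝓝 (mk ℂ w' hw'))) : w = w' := by
  funext k
  have hk := tendsto_nhds_unique (((continuous_normCoordRatio k).tendsto _).comp h)
    (((continuous_normCoordRatio k).tendsto _).comp h')
  rw [normCoordRatio_mk_of_zero_or_one k hw01, normCoordRatio_mk_of_zero_or_one k hw'01] at hk
  rcases hw01 k with h | h <;> rcases hw'01 k with h' | h' <;> simp_all

end NormCoordRatio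

theorem tendsto_mk {V : Type*} [AddCommGroup V] [Module ℂ V] [TopologicalSpace V]
    {α : Type*} {l : Filter α} {f : α → ℙ ℂ V} {g : α → V} {w : V} (hw : w ≠ 0)
    (hg : Tendsto g l (𝓝 w)) (hfg : ∀ᶠ x in l, ∃ hx : g x ≠ 0, f x = mk ℂ (g x) hx) :
    Tendsto f l (𝓝 (mk ℂ w hw)) := by
  classical
  let g' : α → { v : V // v ≠ 0 } := fun x => if hx : g x = 0 then ⟨w, hw⟩ else ⟨g x, hx⟩
  have hg' : Tendsto g' l (𝓝 ⟨w, hw⟩) := by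
    refine tendsto_subtype_rng.2 (hg.congr' ?_)
    filter_upwards [hfg] with x hx
    simp [g', hx.1]
  refine ((continuous_quotient_mk'.tendsto _).comp hg').congr' ?_
  filter_upwards [hfg] with x hx
  obtain ⟨hx, hfx⟩ := hx
  simp [g', hx, hfx]
  rfl

/-- Dividing by `t ^ μ` turns `[t ^ v k]` into `[t ^ (v k - μ)]`, whose exponents are nonnegative,
so the limit is the indicator vector of `{k | v k = μ}`. -/
theorem tendsto_mk_zpow_iff {ι : Type*} [Fintype ι] {v : ι → ℤ} {μ : ℤ}
    (hμ : IsLeast (Set.range v) μ) {f : ℂ → ℙ ℂ (ι → ℂ)}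
    (hf : ∀ t ≠ 0, ∃ h, f t = mk ℂ (fun k => t ^ v k) h) {w : ι → ℂ}
    (hw01 : ∀ k, w k = 0 ∨ w k = 1) (hw : w ≠ 0) :
    Tendsto f (𝓝[≠] 0) (𝓝 (mk ℂ w hw)) ↔ ∀ k, w k = 0 ↔ μ < v k := by
  obtain ⟨⟨k₀, hk₀⟩, hμle⟩ := hμ
  have hμle' : ∀ k, μ ≤ v k := fun k => hμle ⟨k, rfl⟩
  set χ : ι → ℂ := fun k => if v k = μ then 1 else 0
  have hχ : χ ≠ 0 := Function.ne_iff.2 ⟨k₀, by simp [χ, hk₀]⟩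
  have hχ01 : ∀ k, χ k = 0 ∨ χ k = 1 := fun k => by
    by_cases h : v k = μ <;> simp [χ, h]
  have hlim : Tendsto f (𝓝[≠] 0) (𝓝 (mk ℂ χ hχ)) := by
    refine tendsto_mk hχ ((tendsto_zpow_sub_nhds_zero v hμle').mono_left nhdsWithin_le_nhds) ?_
    filter_upwards [self_mem_nhdsWithin] with t (ht : t ≠ 0)
    obtain ⟨_, hft⟩ := hf t ht
    refine ⟨Function.ne_iff.2 ⟨k₀, zpow_ne_zero _ ht⟩,
      hft.trans ((mk_eq_mk_iff' ℂ _ _ _ _).2 ⟨t ^ μ, funext fun k => ?_⟩)⟩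
    simp [← zpow_add₀ ht]
  constructor
  · intro h k
    rw [eq_of_tendsto_mk_of_zero_or_one hw01 hχ01 hw hχ h hlim]
    by_cases h : v k = μ <;> simp [χ, h, lt_iff_le_and_ne, hμle' k, eq_comm]
  · intro h
    convert hlim
    funext k
    rcases hw01 k with hk | hk
    · simp [χ, hk, ((h k).1 hk).ne']
    · have hvk : ¬μ < v k := fun hlt => by simp [(h k).2 hlt] at hk
      simp [χ, hk, le_antisymm (not_lt.1 hvk) (hμle' k)]

end Projectivization

section SimplexRays

variable {R : Type*} [Ring R] {m : ℕ}

/-- The rays `e₀ = -(e₁ + ⋯ + eₘ), e₁, …, eₘ` of the fan of projective space, indexed by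
`Fin (m + 1)` with `e₀` at index `0`. -/
def simplexRay (R : Type*) [Ring R] (m : ℕ) : Fin (m + 1) → Fin m → R :=
  Fin.cons (fun _ => -1) fun k => Pi.single k 1

theorem sum_smul_simplexRay (σ : Finset (Fin (m + 1))) (a : Fin (m + 1) → R) :
    ∑ k ∈ σ, a k • simplexRay R m k =
      fun i => (if i.succ ∈ σ then a i.succ else 0) - if 0 ∈ σ then a 0 else 0 := by
  funext i
  rw [← Fintype.sum_ite_mem, Fin.sum_univ_succ]
  simp only [simplexRay, Fin.cons_zero, Fin.cons_succ, Finset.sum_apply, Pi.add_apply]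
  rw [Finset.sum_eq_single i (fun j _ hji => by split_ifs <;> simp [hji]) (by simp)]
  split_ifs <;> simp [sub_eq_neg_add]

theorem exists_pos_eq_sum_smul_simplexRay_iff [PartialOrder R] [IsOrderedAddMonoid R]
    {σ : Finset (Fin (m + 1))} {w : Fin (m + 1) → R} (hw0 : w 0 = 0) :
    (∃ a : Fin (m + 1) → R, (∀ k ∈ σ, 0 < a k) ∧
        (fun i => w i.succ) = ∑ k ∈ σ, a k • simplexRay R m k) ↔
      ∃ c, (∀ k ∈ σ, c < w k) ∧ ∀ k ∉ σ, w k = c := by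
  simp only [sum_smul_simplexRay, funext_iff]
  constructor
  · rintro ⟨a, ha, hw⟩
    set b : Fin (m + 1) → R := fun k => if k ∈ σ then a k else 0
    have hwb : ∀ k, w k = b k - b 0 := Fin.cases (by simp [hw0]) hw
    refine ⟨-b 0, fun k hk => ?_, fun k hk => ?_⟩
    · simpa [hwb k, b, hk, sub_eq_neg_add] using ha k hk
    · simp [hwb k, b, hk]
  · rintro ⟨c, hlt, heq⟩
    have hb : ∀ k, (if k ∈ σ then w k - c else 0) = w k - c := fun k => by
      split_ifs with hk
      · rfl
      · simp [heq k hk]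
    refine ⟨fun k => w k - c, fun k hk => sub_pos.2 (hlt k hk), fun i => ?_⟩
    simp only [hb]
    rw [hw0]
    abel

end SimplexRays

theorem IsLeast.exists_lt_and_eq_iff {ι α : Type*} [LinearOrder α] {v : ι → α} {μ : α}
    (hμ : IsLeast (Set.range v) μ) {s : Finset ι} (hs : ∃ k, k ∉ s) :
    (∃ c, (∀ k ∈ s, c < v k) ∧ ∀ k ∉ s, v k = c) ↔ ∀ k, k ∈ s ↔ μ < v k := by
  obtain ⟨⟨k₀, hk₀⟩, hμle⟩ := hμ
  constructor
  · rintro ⟨c, hlt, heq⟩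
    obtain ⟨k₁, hk₁⟩ := hs
    have hcμ : c ≤ μ := by
      by_cases h : k₀ ∈ s
      · exact hk₀ ▸ (hlt k₀ h).le
      · exact (hk₀ ▸ heq k₀ h).ge
    obtain rfl : c = μ := le_antisymm hcμ (heq k₁ hk₁ ▸ hμle ⟨k₁, rfl⟩)
    exact fun k => ⟨hlt k, fun hk => by_contra fun h => (heq k h ▸ hk).false⟩
  · exact fun h => ⟨μ, fun k hk => (h k).1 hk,
      fun k hk => le_antisymm (not_lt.1 (mt (h k).2 hk)) (hμle ⟨k, rfl⟩)⟩

/-- With e_0 = -(e_1 + ... + e_m) and e_1,...,e_m the standard basis of ℝ^m,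
for ε ∈ {0,1}^{m+1} ∖ {0} with σ(ε) = {k : ε_k = 0}, the limit as t → 0 of
χ^u(t) = [1 : t^{u_1} : ... : t^{u_m}] equals [ε_0 : ... : ε_m] iff u lies in the
relative interior of Cone(e_k : k ∈ σ(ε)), i.e. u = Σ_{k ∈ σ(ε)} a_k e_k with all
a_k > 0. -/
theorem stmt_15 (m : ℕ) (u : Fin m → ℤ)
    (ε : Fin (m + 1) → ℂ) (hε01 : ∀ k, ε k = 0 ∨ ε k = 1) (hεne : ε ≠ 0)
    (e : Fin (m + 1) → Fin m → ℝ)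
    (he : e = Fin.cons (fun _ => -1) fun k => Pi.single k 1)
    (σ : Finset (Fin (m + 1))) (hσ : ∀ k, k ∈ σ ↔ ε k = 0)
    (f : ℂ → Projectivization ℂ (Fin (m + 1) → ℂ))
    (hf : ∀ t : ℂ, t ≠ 0 →
      f t = Projectivization.mk ℂ (Fin.cons 1 fun i => t ^ u i)
        (by
          intro h
          have h0 := congrFun h 0
          rw [Pi.zero_apply, Fin.cons_zero] at h0
          exact one_ne_zero h0)) :
    Tendsto f (nhdsWithin 0 {t : ℂ | t ≠ 0})
        (nhds (Projectivization.mk ℂ ε hεne))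
      ↔ ∃ a : Fin (m + 1) → ℝ, (∀ k ∈ σ, 0 < a k) ∧
          (fun i => (u i : ℝ)) = ∑ k ∈ σ, a k • e k := by
  let v : Fin (m + 1) → ℤ := Fin.cons 0 u
  obtain ⟨k₀, -, hk₀⟩ := Finset.univ.exists_min_image v Finset.univ_nonempty
  have hμ : IsLeast (Set.range v) (v k₀) :=
    ⟨⟨k₀, rfl⟩, by rintro _ ⟨k, rfl⟩; exact hk₀ k (Finset.mem_univ k)⟩
  have hμℝ : IsLeast (Set.range fun k => (v k : ℝ)) (v k₀) := by
    rw [Set.range_comp']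
    exact Int.cast_mono.map_isLeast hμ
  have hfv : ∀ t ≠ 0, ∃ h, f t = Projectivization.mk ℂ (fun k => t ^ v k) h := by
    refine fun t ht => ⟨fun h => by simpa [v] using congrFun h 0, (hf t ht).trans ?_⟩
    congr
    funext k
    cases k using Fin.cases <;> simp [v]
  have hσc : ∃ k, k ∉ σ := by simpa [hσ, funext_iff] using hεne
  have hu : (fun i => (u i : ℝ)) = fun i => ((v i.succ : ℤ) : ℝ) := by simp [v]
  obtain rfl : e = simplexRay ℝ m := he
  rw [← Set.compl_singleton_eq, Projectivization.tendsto_mk_zpow_iff hμ hfv hε01 hεne, hu,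
    exists_pos_eq_sum_smul_simplexRay_iff (w := fun k => (v k : ℝ)) (by simp [v]),
    hμℝ.exists_lt_and_eq_iff hσc]
  simp [hσ]
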